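/- arXiv:2310.20500 — 6 statements merged into one kernel-verified Lean document; each statement's English description precedes it below -/
import Mathlib

section
/- Let k, n be natural numbers. Suppose that S and U are symmetric subsets of a group G, each containing the identity, and that X is a subset of G of size at most k such that S^n ⊆ X·U and x ∉ y·U^4 for all distinct x, y ∈ X. Then there exists X' ⊆ S^(k-1) with |X'| ≤ |X| such that S^n ⊆ X'·U^2. -/
/-!
Let `W m` be the set of centres `x ∈ X` lying in `S ^ m * U`; it increases with `m`. If
`W (m + 1) = W m` for some `m < n`, then `S ^ n ⊆ W m * U` by induction on word length: for
`s = t s'` with `t ∈ S` and `s' ∈ r * U * U`, `r ∈ S ^ m`, the centres covering `s` and `t r`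
differ by an element of `U ^ 4`, hence coincide by separation, so the centre of `s` lies in
`W (m + 1) = W m`. For the least `m` with `S ^ n ⊆ W m * U` the chain `W 0 ⊂ ⋯ ⊂ W m` is thus
strict, whence `m < |X| ≤ k`. Replacing each centre in `W m` by a point of `S ^ m` within `U` of
it gives `X'`, at the price of a second factor `U`.
-/

open Pointwise

theorem Finset.exists_subset_card_le_subset_mul {G : Type*} [Mul G] {A U : Set G}
    {Y : Finset G} (h : (Y : Set G) ⊆ A * U) :
    ∃ Y' : Finset G, (Y' : Set G) ⊆ A ∧ Y'.card ≤ Y.card ∧ (Y : Set G) ⊆ Y' * U := by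
  classical
  have hY : ∀ y ∈ Y, ∃ a ∈ A, ∃ u ∈ U, a * u = y := fun y hy => h hy
  choose! f hfA u hu hfu using hY
  refine ⟨Y.image f, ?_, Finset.card_image_le, ?_⟩
  · rw [Finset.coe_image]
    exact Set.image_subset_iff.2 hfA
  · intro y hy
    exact ⟨f y, Finset.mem_image_of_mem f hy, u y, hu y hy, hfu y hy⟩

theorem Finset.add_one_le_card_of_ssubset_succ {α : Type*} {s : ℕ → Finset α}
    (h0 : (s 0).Nonempty) {m : ℕ} (h : ∀ j < m, s j ⊂ s (j + 1)) : m + 1 ≤ (s m).card := by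
  induction m with
  | zero => exact h0.card_pos
  | succ m ih =>
    have := Finset.card_lt_card (h m m.lt_succ_self)
    have := ih fun j hj => h j (hj.trans m.lt_succ_self)
    omega

section Layers

variable {G : Type*} [Group G] {S U : Set G} {X : Finset G} {m n : ℕ}

open Classical in
noncomputable def powLayer (X : Finset G) (S U : Set G) (m : ℕ) : Finset G :=
  {x ∈ X | x ∈ S ^ m * U}

theorem mem_powLayer {x : G} : x ∈ powLayer X S U m ↔ x ∈ X ∧ x ∈ S ^ m * U := by
  simp [powLayer]

theorem powLayer_subset : powLayer X S U m ⊆ X := by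
  simp [powLayer]

theorem powLayer_mono (hS1 : (1 : G) ∈ S) : Monotone (powLayer X S U) := fun _ _ hij _ hx =>
  mem_powLayer.2 ⟨(mem_powLayer.1 hx).1,
    Set.mul_subset_mul_right (Set.pow_subset_pow_right hS1 hij) (mem_powLayer.1 hx).2⟩

theorem pow_subset_powLayer_mul (hUsym : U⁻¹ = U) (hcov : S ^ m ⊆ (X : Set G) * U) :
    S ^ m ⊆ (powLayer X S U m : Set G) * U := by
  intro s hs
  obtain ⟨x, hx, u, hu, rfl⟩ := hcov hs
  have hxS : x ∈ S ^ m * U :=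
    ⟨x * u, hs, u⁻¹, hUsym ▸ Set.inv_mem_inv.2 hu, mul_inv_cancel_right x u⟩
  exact Set.mul_mem_mul (mem_powLayer.2 ⟨hx, hxS⟩) hu

theorem one_mem_powLayer_mul (hS1 : (1 : G) ∈ S) (hUsym : U⁻¹ = U)
    (hcov : S ^ n ⊆ (X : Set G) * U) (m : ℕ) : (1 : G) ∈ (powLayer X S U m : Set G) * U := by
  have h0 : S ^ 0 ⊆ (X : Set G) * U := (Set.pow_subset_pow_right hS1 n.zero_le).trans hcov
  have h1 := pow_subset_powLayer_mul hUsym h0 (Set.one_mem_pow hS1)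
  exact Set.mul_subset_mul_right (powLayer_mono hS1 m.zero_le) h1

theorem mul_mem_powLayer_succ_mul (hS1 : (1 : G) ∈ S) (hUsym : U⁻¹ = U)
    (hcov : S ^ n ⊆ (X : Set G) * U)
    (hsep : ∀ x ∈ X, ∀ y ∈ X, x ≠ y → x ∉ y • U ^ 4) (hmn : m + 1 ≤ n)
    {t s : G} (ht : t ∈ S) (hs : s ∈ (powLayer X S U m : Set G) * U) (hts : t * s ∈ S ^ n) :
    t * s ∈ (powLayer X S U (m + 1) : Set G) * U := by
  have hUinv : ∀ u ∈ U, u⁻¹ ∈ U := fun u hu => hUsym ▸ Set.inv_mem_inv.2 hu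
  obtain ⟨y, hy, u₁, hu₁, rfl⟩ := hs
  obtain ⟨r, hr, v, hv, rfl⟩ := (mem_powLayer.1 hy).2
  obtain ⟨x, hx, u, hu, hxu⟩ := hcov hts
  have htr : t * r ∈ S ^ (m + 1) := by rw [pow_succ']; exact Set.mul_mem_mul ht hr
  obtain ⟨x₁, hx₁, u', hu', hx₁u'⟩ := hcov (Set.pow_subset_pow_right hS1 hmn htr)
  beta_reduce at hxu hx₁u'
  have hxx₁ : x = x₁ := by
    by_contra hne
    refine hsep x hx x₁ hx₁ hne ⟨u' * v * u₁ * u⁻¹, ?_, ?_⟩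
    · rw [pow_succ, pow_succ, pow_two]
      exact Set.mul_mem_mul (Set.mul_mem_mul (Set.mul_mem_mul hu' hv) hu₁) (hUinv u hu)
    · have hxeq : x = t * r * v * u₁ * u⁻¹ := by rw [← mul_inv_cancel_right x u, hxu]; group
      change x₁ * (u' * v * u₁ * u⁻¹) = x
      rw [hxeq, ← hx₁u']
      group
  subst hxx₁
  have hxS : x ∈ S ^ (m + 1) * U :=
    ⟨t * r, htr, u'⁻¹, hUinv u' hu', by rw [← hx₁u']; group⟩
  rw [← hxu]
  exact Set.mul_mem_mul (mem_powLayer.2 ⟨hx, hxS⟩) hu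

theorem pow_subset_powLayer_mul_of_stable (hS1 : (1 : G) ∈ S) (hUsym : U⁻¹ = U)
    (hcov : S ^ n ⊆ (X : Set G) * U)
    (hsep : ∀ x ∈ X, ∀ y ∈ X, x ≠ y → x ∉ y • U ^ 4) (hmn : m + 1 ≤ n)
    (hstable : powLayer X S U (m + 1) ⊆ powLayer X S U m) :
    S ^ n ⊆ (powLayer X S U m : Set G) * U := by
  suffices ∀ j ≤ n, S ^ j ⊆ (powLayer X S U m : Set G) * U from this n le_rfl
  intro j
  induction j with
  | zero =>
    intro _ s hs
    rw [pow_zero, Set.mem_one] at hs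
    exact hs ▸ one_mem_powLayer_mul hS1 hUsym hcov m
  | succ j ih =>
    intro hjn _ hs
    have hsn := Set.pow_subset_pow_right hS1 hjn hs
    rw [pow_succ'] at hs
    obtain ⟨t, ht, s, hs, rfl⟩ := hs
    have := mul_mem_powLayer_succ_mul hS1 hUsym hcov hsep hmn ht (ih (by omega) hs) hsn
    exact Set.mul_subset_mul_right (Finset.coe_subset.2 hstable) this

theorem exists_le_pred_pow_subset_powLayer_mul (hS1 : (1 : G) ∈ S) (hUsym : U⁻¹ = U)
    {k : ℕ} (hXk : X.card ≤ k) (hcov : S ^ n ⊆ (X : Set G) * U)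
    (hsep : ∀ x ∈ X, ∀ y ∈ X, x ≠ y → x ∉ y • U ^ 4) :
    ∃ m ≤ k - 1, S ^ n ⊆ (powLayer X S U m : Set G) * U := by
  classical
  have hex : ∃ m, S ^ n ⊆ (powLayer X S U m : Set G) * U :=
    ⟨n, pow_subset_powLayer_mul hUsym hcov⟩
  refine ⟨Nat.find hex, ?_, Nat.find_spec hex⟩
  have hmn : Nat.find hex ≤ n := Nat.find_min' hex (pow_subset_powLayer_mul hUsym hcov)
  have hstrict : ∀ j < Nat.find hex, powLayer X S U j ⊂ powLayer X S U (j + 1) := fun j hj =>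
    (powLayer_mono hS1 j.le_succ).ssubset_of_not_subset fun hstable =>
      Nat.find_min hex hj (pow_subset_powLayer_mul_of_stable hS1 hUsym hcov hsep (by omega) hstable)
  have h0 : (powLayer X S U 0).Nonempty := by
    obtain ⟨x, hx, -⟩ := one_mem_powLayer_mul hS1 hUsym hcov 0
    exact ⟨x, hx⟩
  have := Finset.add_one_le_card_of_ssubset_succ h0 hstrict
  have := Finset.card_le_card (powLayer_subset : powLayer X S U (Nat.find hex) ⊆ X)
  omega

end Layers

theorem stmt_1_general {G : Type*} [Group G] (k n : ℕ) (S U : Set G)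
    (hS1 : (1 : G) ∈ S)
    (hUsym : U⁻¹ = U)
    (X : Finset G) (hXk : X.card ≤ k)
    (hcov : S ^ n ⊆ (X : Set G) * U)
    (hsep : ∀ x ∈ X, ∀ y ∈ X, x ≠ y → x ∉ y • U ^ 4) :
    ∃ X' : Finset G, (X' : Set G) ⊆ S ^ (k - 1) ∧ X'.card ≤ X.card ∧
      S ^ n ⊆ (X' : Set G) * U ^ 2 := by
  obtain ⟨m, hmk, hm⟩ := exists_le_pred_pow_subset_powLayer_mul hS1 hUsym hXk hcov hsep
  have hW : (powLayer X S U m : Set G) ⊆ S ^ m * U := fun _ hx => (mem_powLayer.1 hx).2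
  obtain ⟨X', hX'S, hX'card, hX'W⟩ := Finset.exists_subset_card_le_subset_mul hW
  refine ⟨X', hX'S.trans (Set.pow_subset_pow_right hS1 hmk),
    hX'card.trans (Finset.card_le_card powLayer_subset), ?_⟩
  calc S ^ n ⊆ (powLayer X S U m : Set G) * U := hm
    _ ⊆ X' * U * U := Set.mul_subset_mul_right hX'W
    _ = X' * U ^ 2 := by rw [mul_assoc, pow_two]

theorem stmt_1 {G : Type*} [Group G] (k n : ℕ) (S U : Set G)
    (hSsym : S⁻¹ = S) (hS1 : (1 : G) ∈ S)
    (hUsym : U⁻¹ = U) (hU1 : (1 : G) ∈ U)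
    (X : Finset G) (hXk : X.card ≤ k)
    (hcov : S ^ n ⊆ (X : Set G) * U)
    (hsep : ∀ x ∈ X, ∀ y ∈ X, x ≠ y → x ∉ y • U ^ 4) :
    ∃ X' : Finset G, (X' : Set G) ⊆ S ^ (k - 1) ∧ X'.card ≤ X.card ∧
      S ^ n ⊆ (X' : Set G) * U ^ 2 :=
  stmt_1_general k n S U hS1 hUsym X hXk hcov hsep
end

section
/- Let k, r ∈ ℕ. Suppose G is a group with symmetric generating set S containing the identity, and X ⊆ S^k and U ⊆ G satisfy S^(r+k) ⊆ X·U. Then S^(mr+k) ⊆ X·U^m for all m ∈ ℕ with m ≥ 1. -/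
open Pointwise

namespace Set

variable {M : Type*} [Monoid M]

theorem pow_mul_subset_mul_pow {T X U : Set M} (h : T * X ⊆ X * U) (n : ℕ) :
    T ^ n * X ⊆ X * U ^ n := by
  induction n with
  | zero => simp
  | succ n ih =>
    calc T ^ (n + 1) * X = T * (T ^ n * X) := by rw [pow_succ', mul_assoc]
      _ ⊆ T * (X * U ^ n) := mul_subset_mul_left ih
      _ = T * X * U ^ n := (mul_assoc _ _ _).symm
      _ ⊆ X * U * U ^ n := mul_subset_mul_right h
      _ = X * U ^ (n + 1) := by rw [mul_assoc, ← pow_succ']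

end Set

theorem stmt_2_general {G : Type*} [Group G] (k r : ℕ) (S : Set G)
    (X U : Set G) (hX : X ⊆ S ^ k) (hcov : S ^ (r + k) ⊆ X * U) :
    ∀ m : ℕ, 1 ≤ m → S ^ (m * r + k) ⊆ X * U ^ m := by
  rintro m hm
  obtain ⟨n, rfl⟩ := Nat.exists_eq_add_of_le' hm
  have hstep : S ^ r * X ⊆ X * U :=
    calc S ^ r * X ⊆ S ^ r * S ^ k := Set.mul_subset_mul_left hX
      _ = S ^ (r + k) := (pow_add S r k).symm
      _ ⊆ X * U := hcov
  calc S ^ ((n + 1) * r + k) = (S ^ r) ^ n * S ^ (r + k) := by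
        rw [← pow_mul, ← pow_add]; ring_nf
    _ ⊆ (S ^ r) ^ n * (X * U) := Set.mul_subset_mul_left hcov
    _ = (S ^ r) ^ n * X * U := (mul_assoc _ _ _).symm
    _ ⊆ X * U ^ n * U := Set.mul_subset_mul_right (Set.pow_mul_subset_mul_pow hstep n)
    _ = X * U ^ (n + 1) := by rw [mul_assoc, ← pow_succ]

theorem stmt_2 {G : Type*} [Group G] (k r : ℕ) (S : Set G)
    (hSsym : S⁻¹ = S) (hS1 : (1 : G) ∈ S) (hgen : Subgroup.closure S = ⊤)
    (X U : Set G) (hX : X ⊆ S ^ k) (hcov : S ^ (r + k) ⊆ X * U) :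
    ∀ m : ℕ, 1 ≤ m → S ^ (m * r + k) ⊆ X * U ^ m :=
  stmt_2_general k r S X U hX hcov
end

section
/- Let K ≥ 1 and suppose A is a finite symmetric subset of a group G containing the identity such that |A³| ≤ K|A|. Then A² is a K³-approximate group. -/
open Pointwise Finset

lemma Finset.isApproximateSubgroup_coe_iff {G : Type*} [Group G] [DecidableEq G] {K : ℝ}
    {A : Finset G} :
    IsApproximateSubgroup K (A : Set G) ↔
      A⁻¹ = A ∧ (1 : G) ∈ A ∧ ∃ X : Finset G, (#X : ℝ) ≤ K ∧ A * A ⊆ X * A := by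
  constructor
  · rintro ⟨hA1, hAinv, X, hX, hcov⟩
    refine ⟨mod_cast hAinv, mod_cast hA1, X, hX, ?_⟩
    simpa [← coe_subset, sq] using hcov
  · rintro ⟨hAinv, hA1, X, hX, hcov⟩
    exact ⟨mod_cast hA1, mod_cast hAinv, X, hX, by simpa [← coe_subset, sq] using hcov⟩

theorem stmt_5_general {G : Type*} [Group G] [DecidableEq G] (K : ℝ)
    (A : Finset G) (hAsym : A⁻¹ = A) (hA1 : (1 : G) ∈ A)
    (htrip : ((A ^ 3).card : ℝ) ≤ K * A.card) :
    (A ^ 2)⁻¹ = A ^ 2 ∧ (1 : G) ∈ A ^ 2 ∧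
      ∃ X : Finset G, (X.card : ℝ) ≤ K ^ 3 ∧ (A ^ 2) * (A ^ 2) ⊆ X * (A ^ 2) := by
  have hA2 := IsApproximateSubgroup.of_small_tripling hA1 hAsym htrip
  rw [← coe_pow, isApproximateSubgroup_coe_iff] at hA2
  exact hA2

theorem stmt_5 {G : Type*} [Group G] [DecidableEq G] (K : ℝ) (hK : 1 ≤ K)
    (A : Finset G) (hAsym : A⁻¹ = A) (hA1 : (1 : G) ∈ A)
    (htrip : ((A ^ 3).card : ℝ) ≤ K * A.card) :
    (A ^ 2)⁻¹ = A ^ 2 ∧ (1 : G) ∈ A ^ 2 ∧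
      ∃ X : Finset G, (X.card : ℝ) ≤ K ^ 3 ∧ (A ^ 2) * (A ^ 2) ⊆ X * (A ^ 2) :=
  stmt_5_general K A hAsym hA1 htrip
end

section
/- Let G be a group, H a subgroup of G of index at most k (for some k ∈ ℕ, k ≥ 1), and S a symmetric generating set of G containing the identity. Then every left coset of H contains an element of S^(k-1); that is, S^(k-1) contains a complete set of left coset representatives for H. -/
/-!
Let `G` act on `X = G ⧸ H` and consider the balls `S ^ n • {H}`. Since `1 ∈ S` they increase
with `n`, and since `S ^ (n + 1) • A = S • (S ^ n • A)`, once two consecutive balls agree all later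
ones do. Hence each ball is either the union of all balls, which is `X` because `S` generates `G`,
or has at least `n + 1` points; as `X` has at most `k` points, the ball of radius `k - 1` is `X`.
-/

open Pointwise

theorem Subgroup.exists_mem_pow_of_mem_closure {G : Type*} [Group G] {S : Set G} (hS : S⁻¹ = S)
    {g : G} (hg : g ∈ closure S) : ∃ n, g ∈ S ^ n := by
  induction hg using Subgroup.closure_induction_left with
  | one => exact ⟨0, by simp⟩
  | mul_left x hx y _ ih =>
    obtain ⟨n, hn⟩ := ih
    exact ⟨n + 1, by rw [pow_succ']; exact Set.mul_mem_mul hx hn⟩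
  | inv_mul_cancel x hx y _ ih =>
    obtain ⟨n, hn⟩ := ih
    have hx' : x⁻¹ ∈ S := by rw [← hS]; exact Set.inv_mem_inv.mpr hx
    exact ⟨n + 1, by rw [pow_succ']; exact Set.mul_mem_mul hx' hn⟩

namespace Set

variable {M X : Type*} [Monoid M] [MulAction M X] {S : Set M} {A : Set X}

theorem pow_smul_subset_pow_smul (hS : 1 ∈ S) {m n : ℕ} (hmn : m ≤ n) :
    S ^ m • A ⊆ S ^ n • A :=
  smul_subset_smul_right (pow_subset_pow_right hS hmn)

theorem pow_smul_subset_of_succ_subset (hS : 1 ∈ S) {n : ℕ}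
    (h : S ^ (n + 1) • A ⊆ S ^ n • A) (m : ℕ) : S ^ m • A ⊆ S ^ n • A := by
  induction m with
  | zero => exact pow_smul_subset_pow_smul hS n.zero_le
  | succ m ih =>
    calc S ^ (m + 1) • A = S • (S ^ m • A) := by rw [pow_succ', mul_smul]
      _ ⊆ S • (S ^ n • A) := smul_subset_smul_left ih
      _ = S ^ (n + 1) • A := by rw [pow_succ', mul_smul]
      _ ⊆ S ^ n • A := h

theorem ncard_add_le_ncard_pow_smul_or_saturated [Finite X] (hS : 1 ∈ S) (n : ℕ) :
    A.ncard + n ≤ (S ^ n • A).ncard ∨ ∀ m, S ^ m • A ⊆ S ^ n • A := by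
  induction n with
  | zero => left; simp
  | succ n ih =>
    by_cases hstuck : S ^ (n + 1) • A ⊆ S ^ n • A
    · exact .inr fun m => (pow_smul_subset_of_succ_subset hS hstuck m).trans
        (pow_smul_subset_pow_smul hS (Nat.le_add_right n 1))
    · rcases ih with hgrow | hsat
      · have := ncard_lt_ncard ⟨pow_smul_subset_pow_smul hS (Nat.le_add_right n 1), hstuck⟩ (toFinite _)
        exact .inl (by omega)
      · exact absurd (hsat (n + 1)) hstuck

theorem pow_smul_subset_of_card_le [Finite X] (hS : 1 ∈ S) {n : ℕ}
    (hn : Nat.card X ≤ A.ncard + n) (m : ℕ) : S ^ m • A ⊆ S ^ n • A := by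
  rcases ncard_add_le_ncard_pow_smul_or_saturated (A := A) hS n with hgrow | hsat
  · have hfull : S ^ n • A = univ :=
      eq_of_subset_of_ncard_le (subset_univ _) (by rw [ncard_univ]; omega)
    exact hfull ▸ subset_univ _
  · exact hsat m

end Set

theorem stmt_8_general {G : Type*} [Group G] (H : Subgroup G) (k : ℕ)
    (hfin : H.index ≠ 0) (hindex : H.index ≤ k)
    (S : Set G) (hSsym : S⁻¹ = S) (hS1 : (1 : G) ∈ S)
    (hgen : Subgroup.closure S = ⊤) :
    ∀ g : G, ∃ s ∈ S ^ (k - 1), g⁻¹ * s ∈ H := by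
  intro g
  have : Finite (G ⧸ H) := Subgroup.index_ne_zero_iff_finite.mp hfin
  have hcard : Nat.card (G ⧸ H) ≤ ({((1 : G) : G ⧸ H)} : Set (G ⧸ H)).ncard + (k - 1) := by
    rw [Set.ncard_singleton, ← Subgroup.index]
    omega
  obtain ⟨m, hm⟩ := Subgroup.exists_mem_pow_of_mem_closure hSsym (hgen ▸ Subgroup.mem_top g)
  have hg : (g : G ⧸ H) ∈ S ^ (k - 1) • {((1 : G) : G ⧸ H)} :=
    Set.pow_smul_subset_of_card_le hS1 hcard m <| by
      simpa using Set.smul_mem_smul hm (Set.mem_singleton ((1 : G) : G ⧸ H))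
  obtain ⟨s, hs, _, rfl, hsg⟩ := Set.mem_smul.mp hg
  exact ⟨s, hs, QuotientGroup.eq.mp (by simpa using hsg.symm)⟩

theorem stmt_8 {G : Type*} [Group G] (H : Subgroup G) (k : ℕ) (hk : 1 ≤ k)
    (hfin : H.index ≠ 0) (hindex : H.index ≤ k)
    (S : Set G) (hSsym : S⁻¹ = S) (hS1 : (1 : G) ∈ S)
    (hgen : Subgroup.closure S = ⊤) :
    ∀ g : G, ∃ s ∈ S ^ (k - 1), g⁻¹ * s ∈ H :=
  stmt_8_general H k hfin hindex S hSsym hS1 hgen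
end

section
/- Let K ≥ 1 and let A be a finite nonempty symmetric subset of a group G satisfying |A²| ≤ K|A|. Define V = {x ∈ G : |A ∩ xA| > |A|/(2K)}. Then V is symmetric, V ⊆ A², and |V| ≥ |A|/(2K). -/
open Pointwise Finset

/-!
The number `#(A ∩ x • A)` counts the representations `x = a * b⁻¹` with `a, b ∈ A`, so these
numbers sum to `#A ^ 2` over `A * A⁻¹ = A ^ 2`, and each is at most `#A`. The `x ∈ A ^ 2` outside
`V` contribute at most `#(A ^ 2) * #A / (2K) ≤ #A ^ 2 / 2`, so `V` carries at least half of the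
total and `#V ≥ #A / 2`. Symmetry of `V` holds because `A ∩ x⁻¹ • A = x⁻¹ • (x • A ∩ A)`.
-/

namespace Finset

lemma sum_le_card_filter_lt_nsmul_add_card_nsmul {ι R : Type*} [AddCommMonoid R] [LinearOrder R]
    [IsOrderedAddMonoid R] (s : Finset ι) (f : ι → R) {M t : R} (hf : ∀ i ∈ s, f i ≤ M)
    (ht : 0 ≤ t) : ∑ i ∈ s, f i ≤ #{i ∈ s | t < f i} • M + #s • t := by
  rw [← sum_filter_add_sum_filter_not s (fun i ↦ t < f i)]
  gcongr
  · exact sum_le_card_nsmul _ _ _ fun i hi ↦ hf i (mem_filter.1 hi).1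
  · calc ∑ i ∈ s with ¬ t < f i, f i ≤ #{i ∈ s | ¬ t < f i} • t :=
          sum_le_card_nsmul _ _ _ fun i hi ↦ not_lt.1 (mem_filter.1 hi).2
      _ ≤ #s • t := nsmul_le_nsmul_left ht (card_filter_le _ _)

variable {G : Type*} [Group G] [DecidableEq G]

lemma sum_convolution (A B : Finset G) : ∑ x ∈ A * B, A.convolution B x = #A * #B := by
  rw [← card_product]
  exact (card_eq_sum_card_fiberwise fun ab hab ↦ mul_mem_mul (mem_product.1 hab).1
    (mem_product.1 hab).2).symm

variable (A : Finset G)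

lemma card_inter_inv_smul (x : G) : #(A ∩ x⁻¹ • A) = #(A ∩ x • A) := by
  rw [card_inter_smul, card_inter_smul, convolution_inv, inv_inv]

lemma mem_mul_inv_of_card_inter_smul_pos {x : G} (h : 0 < #(A ∩ x • A)) : x ∈ A * A⁻¹ := by
  rwa [card_inter_smul, convolution_pos] at h

lemma sum_card_inter_smul : ∑ x ∈ A * A⁻¹, #(A ∩ x • A) = #A * #A := by
  simp_rw [card_inter_smul]
  rw [sum_convolution, card_inv]

lemma card_le_two_mul_card_filter_lt_card_inter_smul {K : ℝ} (hK : 0 < K)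
    (hA : #(A * A⁻¹) ≤ K * #A) :
    (#A : ℝ) ≤ 2 * #{x ∈ A * A⁻¹ | #A / (2 * K) < #(A ∩ x • A)} := by
  set W := {x ∈ A * A⁻¹ | (#A : ℝ) / (2 * K) < #(A ∩ x • A)}
  have hcount : (#A : ℝ) * #A ≤ #W * #A + #(A * A⁻¹) * (#A / (2 * K)) := by
    have hsplit := sum_le_card_filter_lt_nsmul_add_card_nsmul (A * A⁻¹)
      (fun x ↦ (#(A ∩ x • A) : ℝ)) (M := #A) (t := #A / (2 * K))
      (fun x _ ↦ by exact_mod_cast card_le_card inter_subset_left) (by positivity)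
    simpa only [← Nat.cast_sum, sum_card_inter_smul, nsmul_eq_mul, Nat.cast_mul] using hsplit
  have hhalf : (#(A * A⁻¹) : ℝ) * (#A / (2 * K)) ≤ #A * #A / 2 := by
    calc (#(A * A⁻¹) : ℝ) * (#A / (2 * K)) ≤ K * #A * (#A / (2 * K)) := by gcongr
      _ = #A * #A / 2 := by field_simp
  rcases (#A).eq_zero_or_pos with h | h
  · simp [h]
  · have hA₀ : (0 : ℝ) < #A := by exact_mod_cast h
    nlinarith

end Finset

theorem stmt_14_general {G : Type*} [Group G] [DecidableEq G] (K : ℝ) (hK : 1 ≤ K)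
    (A : Finset G) (hAsym : A⁻¹ = A)
    (hdoub : ((A ^ 2).card : ℝ) ≤ K * A.card)
    (V : Set G) (hV : V = {x : G | (A.card : ℝ) / (2 * K) < ((A ∩ x • A).card : ℝ)}) :
    V⁻¹ = V ∧ V ⊆ ((A ^ 2 : Finset G) : Set G) ∧ (A.card : ℝ) / (2 * K) ≤ V.ncard := by
  have hK₀ : 0 < K := by linarith
  have hA₂ : A * A⁻¹ = A ^ 2 := by rw [hAsym, sq]
  have hVA₂ : V ⊆ ((A ^ 2 : Finset G) : Set G) := fun x hx ↦ by
    rw [hV] at hx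
    have hpos : (0 : ℝ) < #(A ∩ x • A) := (by positivity : (0 : ℝ) ≤ #A / (2 * K)).trans_lt hx
    exact hA₂ ▸ mem_mul_inv_of_card_inter_smul_pos A (by exact_mod_cast hpos)
  have hVW : V = ({x ∈ A ^ 2 | (#A : ℝ) / (2 * K) < #(A ∩ x • A)} : Finset G) := by
    rw [coe_filter]
    exact Set.ext fun x ↦ ⟨fun hx ↦ ⟨hVA₂ hx, by rwa [hV] at hx⟩, fun hx ↦ by rw [hV]; exact hx.2⟩
  refine ⟨by ext x; simp [hV, card_inter_inv_smul], hVA₂, ?_⟩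
  rw [hVW, Set.ncard_coe_finset]
  have hhalf := card_le_two_mul_card_filter_lt_card_inter_smul A hK₀ (hA₂ ▸ hdoub)
  rw [hA₂] at hhalf
  calc (#A : ℝ) / (2 * K) ≤ #A / 2 := by gcongr; linarith
    _ ≤ _ := by linarith

theorem stmt_14 {G : Type*} [Group G] [DecidableEq G] (K : ℝ) (hK : 1 ≤ K)
    (A : Finset G) (hA : A.Nonempty) (hAsym : A⁻¹ = A)
    (hdoub : ((A ^ 2).card : ℝ) ≤ K * A.card)
    (V : Set G) (hV : V = {x : G | (A.card : ℝ) / (2 * K) < ((A ∩ x • A).card : ℝ)}) :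
    V⁻¹ = V ∧ V ⊆ ((A ^ 2 : Finset G) : Set G) ∧ (A.card : ℝ) / (2 * K) ≤ V.ncard :=
  stmt_14_general K hK A hAsym hdoub V hV
end

section
/- Let K ≥ 1 and let A be a finite nonempty symmetric subset of a group G containing the identity with |A²| ≤ K|A|. Define V = {x ∈ G : |A ∩ xA| > |A|/(2K)}. Then for every n ∈ ℕ with n ≥ 1, |A·V^n·A| ≤ 2^n·K^(2n+1)·|A|. -/
/-!
Double counting: for `v` with `|A ∩ vA| > |A|/(2K)`, every `s = x v a` with `x ∈ X`, `a ∈ A` has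
more than `|A|/(2K)` factorisations `s = y z` with `y ∈ XA`, `z ∈ A⁻¹A = A²`. Hence
`|XVA| ≤ 2K |XA| |A²| / |A| ≤ 2K² |XA|`, and iterating from `X = A` gives
`|AVⁿA| ≤ (2K²)ⁿ |A²| ≤ 2ⁿ K^(2n+1) |A|`. The set `V` is finite because it lies in `AA⁻¹`.
-/

open Pointwise Finset

namespace Finset

variable {G : Type*} [Group G] [DecidableEq G]

lemma mem_mul_inv_of_inter_smul_nonempty {A : Finset G} {v : G} (h : (A ∩ v • A).Nonempty) :
    v ∈ A * A⁻¹ := by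
  obtain ⟨a, ha⟩ := h
  obtain ⟨haA, hav⟩ := mem_inter.1 ha
  obtain ⟨b, hb, rfl⟩ := mem_smul_finset.1 hav
  simpa using mul_mem_mul haA (inv_mem_inv hb)

/-- Every `s = x * v * a` splits as `(x * b) * (b⁻¹ * v * a)` for each `b ∈ A ∩ v • A`. -/
lemma card_inter_smul_le_card_mul_fiber {X A : Finset G} {x v a : G} (hx : x ∈ X) (ha : a ∈ A) :
    #(A ∩ v • A) ≤ #{p ∈ (X * A) ×ˢ (A⁻¹ * A) | p.1 * p.2 = x * v * a} := by
  refine card_le_card_of_injOn (fun b ↦ (x * b, b⁻¹ * (v * a))) (fun b hb ↦ ?_)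
    (fun b₁ _ b₂ _ h ↦ mul_left_cancel (congrArg Prod.fst h))
  obtain ⟨hbA, hbv⟩ := mem_inter.1 (mem_coe.1 hb)
  obtain ⟨c, hc, rfl⟩ := mem_smul_finset.1 hbv
  refine mem_filter.2 ⟨mem_product.2 ⟨mul_mem_mul hx hbA, ?_⟩, by group⟩
  simpa [mul_assoc] using mul_mem_mul (inv_mem_inv hc) ha

theorem card_mul_mul_mul_le_of_le_card_inter_smul {δ : ℝ} (X W A : Finset G) (hW : ∀ v ∈ W, δ ≤ #(A ∩ v • A)) :
    #(X * W * A) * δ ≤ #(X * A) * #(A⁻¹ * A) := by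
  have := card_nsmul_le_card_nsmul (s := X * W * A) (t := (X * A) ×ˢ (A⁻¹ * A))
    (fun s p ↦ p.1 * p.2 = s) (m := δ) (n := (1 : ℝ)) ?_ ?_
  · simpa [nsmul_eq_mul] using this
  · intro s hs
    obtain ⟨y, hy, a, ha, rfl⟩ := mem_mul.1 hs
    obtain ⟨x, hx, v, hv, rfl⟩ := mem_mul.1 hy
    exact (hW v hv).trans (mod_cast card_inter_smul_le_card_mul_fiber hx ha)
  · intro p _
    exact_mod_cast card_le_one.2 fun s hs t ht ↦ by
      simp only [bipartiteBelow, mem_filter] at hs ht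
      exact hs.2.symm.trans ht.2

theorem card_mul_pow_mul_le {c : ℝ} (hc : 0 ≤ c) {W A : Finset G}
    (h : ∀ X : Finset G, (#(X * W * A) : ℝ) ≤ c * #(X * A)) (X : Finset G) (n : ℕ) :
    (#(X * W ^ n * A) : ℝ) ≤ c ^ n * #(X * A) := by
  induction n with
  | zero => simp
  | succ n ih =>
    calc (#(X * W ^ (n + 1) * A) : ℝ) = #(X * W ^ n * W * A) := by rw [pow_succ, ← mul_assoc X]
      _ ≤ c * #(X * W ^ n * A) := h _
      _ ≤ c * (c ^ n * #(X * A)) := by gcongr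
      _ = c ^ (n + 1) * #(X * A) := by ring

theorem card_mul_mul_le_of_card_sq_le {K : ℝ} (hK : 0 < K) {A W : Finset G}
    (hA : A.Nonempty) (hAsym : A⁻¹ = A) (hdoub : (#(A ^ 2) : ℝ) ≤ K * #A)
    (hW : ∀ v ∈ W, #A / (2 * K) ≤ #(A ∩ v • A)) (X : Finset G) :
    (#(X * W * A) : ℝ) ≤ 2 * K ^ 2 * #(X * A) := by
  have hA₀ : (0 : ℝ) < #A := mod_cast hA.card_pos
  refine le_of_mul_le_mul_right ?_ (by positivity : (0 : ℝ) < #A / (2 * K))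
  calc (#(X * W * A) : ℝ) * (#A / (2 * K)) ≤ #(X * A) * #(A⁻¹ * A) := card_mul_mul_mul_le_of_le_card_inter_smul X W A hW
    _ ≤ #(X * A) * (K * #A) := by rw [hAsym, ← sq]; gcongr
    _ = 2 * K ^ 2 * #(X * A) * (#A / (2 * K)) := by field_simp

end Finset

theorem stmt_15_general {G : Type*} [Group G] [DecidableEq G] (K : ℝ) (hK : 1 ≤ K)
    (A : Finset G) (hA : A.Nonempty) (hAsym : A⁻¹ = A)
    (hdoub : ((A ^ 2).card : ℝ) ≤ K * A.card)
    (V : Set G) (hV : V = {x : G | (A.card : ℝ) / (2 * K) < ((A ∩ x • A).card : ℝ)}) :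
    ∀ n : ℕ, 1 ≤ n →
      (((A : Set G) * V ^ n * (A : Set G)).ncard : ℝ) ≤ 2 ^ n * K ^ (2 * n + 1) * A.card := by
  intro n _
  have hK₀ : 0 < K := zero_lt_one.trans_le hK
  set W : Finset G := {x ∈ A * A⁻¹ | (#A : ℝ) / (2 * K) < #(A ∩ x • A)}
  have hVW : V = W := by
    ext x
    simp only [hV, W, Set.mem_ofPred_eq, coe_filter]
    refine ⟨fun hx ↦ ⟨mem_mul_inv_of_inter_smul_nonempty (card_pos.1 ?_), hx⟩, And.right⟩
    exact_mod_cast (by positivity : (0 : ℝ) ≤ #A / (2 * K)).trans_lt hx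
  have hstep := card_mul_mul_le_of_card_sq_le hK₀ hA hAsym hdoub (W := W)
    fun v hv ↦ (mem_filter.1 hv).2.le
  rw [hVW, ← coe_pow, ← coe_mul, ← coe_mul, Set.ncard_coe_finset]
  calc (#(A * W ^ n * A) : ℝ) ≤ (2 * K ^ 2) ^ n * #(A * A) :=
        card_mul_pow_mul_le (by positivity) hstep A n
    _ ≤ (2 * K ^ 2) ^ n * (K * #A) := by rw [← sq]; gcongr
    _ = 2 ^ n * K ^ (2 * n + 1) * #A := by ring

theorem stmt_15 {G : Type*} [Group G] [DecidableEq G] (K : ℝ) (hK : 1 ≤ K)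
    (A : Finset G) (hA : A.Nonempty) (hAsym : A⁻¹ = A) (hA1 : (1 : G) ∈ A)
    (hdoub : ((A ^ 2).card : ℝ) ≤ K * A.card)
    (V : Set G) (hV : V = {x : G | (A.card : ℝ) / (2 * K) < ((A ∩ x • A).card : ℝ)}) :
    ∀ n : ℕ, 1 ≤ n →
      (((A : Set G) * V ^ n * (A : Set G)).ncard : ℝ) ≤ 2 ^ n * K ^ (2 * n + 1) * A.card :=
  stmt_15_general K hK A hA hAsym hdoub V hV
end
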